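/- arXiv:math-ph/0504042 — 3 statements merged into one kernel-verified Lean document; each statement's English description precedes it below -/
import Mathlib

section
/- Let U_R: ℝ³ → ℝ be nonnegative, integrable with ∫ U_R = 4π and supported in the ball of radius R. Then for any Φ ∈ H¹(ℝ³), |∫∫ |Φ(x)|²|Φ(y)|² U_R(x-y) dx dy - 4π ‖Φ‖₄⁴| ≤ 8π R ‖Φ‖₆³ ‖∇Φ‖₂. -/
open MeasureTheory Real
open scoped RealInnerProductSpace ENNReal NNReal
noncomputable section
abbrev E3 := EuclideanSpace ℝ (Fin 3)

lemma normsq_hasFDerivAt (Φ : E3 → ℂ) (hdiff : Differentiable ℝ Φ) (x : E3) :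
    HasFDerivAt (fun y => ‖Φ y‖ ^ 2)
      ((fderivInnerCLM ℝ (Φ x, Φ x)).comp ((fderiv ℝ Φ x).prod (fderiv ℝ Φ x))) x := by
  have h := ((hdiff x).hasFDerivAt).inner ℝ ((hdiff x).hasFDerivAt)
  simpa [real_inner_self_eq_norm_sq] using h

lemma fderiv_normsq_bound (Φ : E3 → ℂ) (hdiff : Differentiable ℝ Φ) (x : E3) :
    ‖fderiv ℝ (fun y => ‖Φ y‖ ^ 2) x‖ ≤ 2 * ‖Φ x‖ * ‖fderiv ℝ Φ x‖ := by
  rw [(normsq_hasFDerivAt Φ hdiff x).fderiv]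
  refine ContinuousLinearMap.opNorm_le_bound _ (by positivity) fun v => ?_
  simp only [ContinuousLinearMap.coe_comp', Function.comp_apply,
    ContinuousLinearMap.prod_apply, fderivInnerCLM_apply]
  calc ‖⟪Φ x, fderiv ℝ Φ x v⟫ + ⟪fderiv ℝ Φ x v, Φ x⟫‖
      ≤ ‖⟪Φ x, fderiv ℝ Φ x v⟫‖ + ‖⟪fderiv ℝ Φ x v, Φ x⟫‖ := norm_add_le _ _
    _ ≤ ‖Φ x‖ * ‖fderiv ℝ Φ x v‖ + ‖fderiv ℝ Φ x v‖ * ‖Φ x‖ := by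
        gcongr <;> exact norm_inner_le_norm _ _
    _ = 2 * ‖Φ x‖ * ‖fderiv ℝ Φ x v‖ := by ring
    _ ≤ 2 * ‖Φ x‖ * (‖fderiv ℝ Φ x‖ * ‖v‖) := by
        gcongr
        exact (fderiv ℝ Φ x).le_opNorm v
    _ = 2 * ‖Φ x‖ * ‖fderiv ℝ Φ x‖ * ‖v‖ := by ring

lemma ftc_pointwise (u : E3 → ℝ) (hu : Differentiable ℝ u) (x z : E3) :
    ENNReal.ofReal |u (x - z) - u x| ≤
      ∫⁻ t in Set.Icc (0:ℝ) 1, (‖z‖₊ : ℝ≥0∞) * ‖fderiv ℝ u (x - t • z)‖₊ := by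
  by_cases hfin : (∫⁻ t in Set.Icc (0:ℝ) 1, (‖z‖₊:ℝ≥0∞) * ‖fderiv ℝ u (x - t • z)‖₊) = ∞
  · simp [hfin]
  set ψ : ℝ → ℝ := fun t => (fderiv ℝ u (x - t • z)) (-z) with hψ
  have hγ : ∀ t : ℝ, HasDerivAt (fun s : ℝ => x - s • z) (-z) t := by
    intro t
    simpa using ((hasDerivAt_id t).smul_const z).const_sub x
  have hderiv : ∀ t : ℝ, HasDerivAt (fun s => u (x - s • z)) (ψ t) t := by
    intro t
    exact ((hu _).hasFDerivAt).comp_hasDerivAt t (hγ t)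
  have hmeasψ : Measurable ψ := by
    have h1 : Measurable (fderiv ℝ u) := measurable_fderiv ℝ u
    have h2 : Measurable fun t : ℝ => fderiv ℝ u (x - t • z) :=
      h1.comp ((continuous_const.sub (continuous_id.smul continuous_const)).measurable)
    exact (ContinuousLinearMap.apply ℝ ℝ (-z : E3)).continuous.measurable.comp h2
  have hboundψ : ∀ t : ℝ, (‖ψ t‖₊ : ℝ≥0∞) ≤ (‖z‖₊:ℝ≥0∞) * ‖fderiv ℝ u (x - t • z)‖₊ := by
    intro t
    have : ‖ψ t‖ ≤ ‖fderiv ℝ u (x - t • z)‖ * ‖(-z : E3)‖ :=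
      (fderiv ℝ u (x - t • z)).le_opNorm _
    rw [norm_neg] at this
    rw [← ENNReal.coe_mul, ENNReal.coe_le_coe, ← NNReal.coe_le_coe]
    push_cast
    simpa [mul_comm] using this
  have hInt : IntegrableOn ψ (Set.Icc (0:ℝ) 1) := by
    refine ⟨hmeasψ.aestronglyMeasurable, ?_⟩
    refine lt_of_le_of_lt (lintegral_mono fun t => hboundψ t) ?_
    exact lt_top_iff_ne_top.2 hfin
  have hII : IntervalIntegrable ψ volume 0 1 := by
    rw [intervalIntegrable_iff_integrableOn_Icc_of_le (by norm_num)]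
    exact hInt
  have hftc : ∫ t in (0:ℝ)..1, ψ t = u (x - z) - u x := by
    have := intervalIntegral.integral_eq_sub_of_hasDerivAt
      (f := fun s => u (x - s • z)) (f' := ψ) (fun t _ => hderiv t) hII
    simpa using this
  calc ENNReal.ofReal |u (x - z) - u x|
      = (‖∫ t in Set.Ioc (0:ℝ) 1, ψ t‖₊ : ℝ≥0∞) := by
        rw [← hftc, intervalIntegral.integral_of_le (by norm_num)]
        simp [Real.norm_eq_abs, ENNReal.ofReal, Real.toNNReal, ← norm_toNNReal]
    _ ≤ ∫⁻ t in Set.Ioc (0:ℝ) 1, (‖ψ t‖₊ : ℝ≥0∞) :=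
        enorm_integral_le_lintegral_enorm _
    _ ≤ ∫⁻ t in Set.Icc (0:ℝ) 1, (‖ψ t‖₊ : ℝ≥0∞) :=
        lintegral_mono_set Set.Ioc_subset_Icc_self
    _ ≤ _ := lintegral_mono fun t => hboundψ t

lemma translate_lintegral (g : E3 → ℝ≥0∞) (hg : Measurable g) (w : E3) :
    ∫⁻ x, g (x - w) = ∫⁻ x, g x := by
  simpa [sub_eq_add_neg] using (measurePreserving_add_right volume (-w)).lintegral_comp hg

lemma Q_bound (Φ : E3 → ℂ) (hdiff : Differentiable ℝ Φ) (w : E3) :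
    ∫⁻ x, (‖Φ x‖₊ : ℝ≥0∞) ^ (2:ℝ) * (‖fderiv ℝ (fun y => ‖Φ y‖ ^ 2) (x - w)‖₊ : ℝ≥0∞) ≤
      (∫⁻ x, (‖Φ x‖₊ : ℝ≥0∞) ^ (6:ℝ)) ^ ((1:ℝ)/3) *
      (2 * ((∫⁻ x, (‖Φ x‖₊:ℝ≥0∞) ^ (6:ℝ)) ^ ((1:ℝ)/6) *
        (∫⁻ x, (‖fderiv ℝ Φ x‖₊:ℝ≥0∞) ^ (2:ℝ)) ^ ((1:ℝ)/2))) := by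
  have hΦc : Continuous Φ := hdiff.continuous
  set F : E3 → ℝ≥0∞ := fun x => (‖Φ x‖₊ : ℝ≥0∞) with hF
  set G : E3 → ℝ≥0∞ := fun x => (‖fderiv ℝ Φ x‖₊ : ℝ≥0∞) with hG
  set g : E3 → ℝ≥0∞ := fun x => (‖fderiv ℝ (fun y => ‖Φ y‖ ^ 2) x‖₊ : ℝ≥0∞) with hg
  have hFm : Measurable F := hΦc.measurable.nnnorm.coe_nnreal_ennreal
  have hGm : Measurable G := (measurable_fderiv ℝ Φ).nnnorm.coe_nnreal_ennreal
  have hgm : Measurable g :=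
    (measurable_fderiv ℝ (fun y => ‖Φ y‖ ^ 2)).nnnorm.coe_nnreal_ennreal
  have hshift : Measurable fun x : E3 => x - w :=
    (continuous_id.sub continuous_const).measurable
  -- pointwise bound g ≤ 2 F G
  have hptwise : ∀ y, g y ≤ 2 * (F y * G y) := by
    intro y
    have h := fderiv_normsq_bound Φ hdiff y
    have h2 : ‖fderiv ℝ (fun y => ‖Φ y‖ ^ 2) y‖₊ ≤ 2 * (‖Φ y‖₊ * ‖fderiv ℝ Φ y‖₊) := by
      rw [← NNReal.coe_le_coe]
      push_cast
      calc (‖fderiv ℝ (fun y => ‖Φ y‖ ^ 2) y‖ : ℝ) ≤ 2 * ‖Φ y‖ * ‖fderiv ℝ Φ y‖ := h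
        _ = 2 * (‖Φ y‖ * ‖fderiv ℝ Φ y‖) := by ring
    calc g y = (‖fderiv ℝ (fun y => ‖Φ y‖ ^ 2) y‖₊ : ℝ≥0∞) := rfl
      _ ≤ ((2 * (‖Φ y‖₊ * ‖fderiv ℝ Φ y‖₊) : ℝ≥0) : ℝ≥0∞) := ENNReal.coe_le_coe.2 h2
      _ = 2 * (F y * G y) := by push_cast; ring
  -- Hölder 3, 3/2
  have hconj1 : Real.HolderConjugate 3 (3/2) := Real.holderConjugate_iff.mpr ⟨by norm_num, by norm_num⟩
  have step1 : ∫⁻ x, F x ^ (2:ℝ) * g (x - w)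
      ≤ (∫⁻ x, F x ^ (6:ℝ)) ^ ((1:ℝ)/3) * (∫⁻ x, g x ^ ((3:ℝ)/2)) ^ ((2:ℝ)/3) := by
    have h := ENNReal.lintegral_mul_le_Lp_mul_Lq volume hconj1
      (f := fun x => F x ^ (2:ℝ)) (g := fun x => g (x - w))
      ((hFm.pow_const _).aemeasurable) ((hgm.comp hshift).aemeasurable)
    have e1 : ∀ x : E3, (F x ^ (2:ℝ)) ^ (3:ℝ) = F x ^ (6:ℝ) := by
      intro x; rw [← ENNReal.rpow_mul]; norm_num
    have e2 : ∫⁻ x, g (x - w) ^ ((3:ℝ)/2) = ∫⁻ x, g x ^ ((3:ℝ)/2) :=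
      translate_lintegral (fun x => g x ^ ((3:ℝ)/2)) (hgm.pow_const _) w
    calc ∫⁻ x, F x ^ (2:ℝ) * g (x - w)
        ≤ (∫⁻ x, (F x ^ (2:ℝ)) ^ (3:ℝ)) ^ ((1:ℝ)/3)
          * (∫⁻ x, g (x - w) ^ ((3:ℝ)/2)) ^ ((1:ℝ)/(3/2)) := h
      _ = (∫⁻ x, F x ^ (6:ℝ)) ^ ((1:ℝ)/3) * (∫⁻ x, g x ^ ((3:ℝ)/2)) ^ ((2:ℝ)/3) := by
          simp_rw [e1]; rw [e2]; norm_num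
  -- bound ∫ g^{3/2}
  have hconj2 : Real.HolderConjugate 4 (4/3) := Real.holderConjugate_iff.mpr ⟨by norm_num, by norm_num⟩
  have step2 : ∫⁻ x, g x ^ ((3:ℝ)/2)
      ≤ 2 ^ ((3:ℝ)/2) * ((∫⁻ x, F x ^ (6:ℝ)) ^ ((1:ℝ)/4)
          * (∫⁻ x, G x ^ (2:ℝ)) ^ ((3:ℝ)/4)) := by
    have hb : ∀ x, g x ^ ((3:ℝ)/2) ≤ 2 ^ ((3:ℝ)/2) * (F x ^ ((3:ℝ)/2) * G x ^ ((3:ℝ)/2)) := by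
      intro x
      calc g x ^ ((3:ℝ)/2) ≤ (2 * (F x * G x)) ^ ((3:ℝ)/2) := by
            exact ENNReal.rpow_le_rpow (hptwise x) (by norm_num)
        _ = 2 ^ ((3:ℝ)/2) * (F x ^ ((3:ℝ)/2) * G x ^ ((3:ℝ)/2)) := by
            rw [ENNReal.mul_rpow_of_nonneg _ _ (by norm_num),
              ENNReal.mul_rpow_of_nonneg _ _ (by norm_num)]
    have hH := ENNReal.lintegral_mul_le_Lp_mul_Lq volume hconj2
      (f := fun x => F x ^ ((3:ℝ)/2)) (g := fun x => G x ^ ((3:ℝ)/2))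
      ((hFm.pow_const _).aemeasurable) ((hGm.pow_const _).aemeasurable)
    have e3 : ∀ x : E3, (F x ^ ((3:ℝ)/2)) ^ (4:ℝ) = F x ^ (6:ℝ) := by
      intro x; rw [← ENNReal.rpow_mul]; norm_num
    have e4 : ∀ x : E3, (G x ^ ((3:ℝ)/2)) ^ ((4:ℝ)/3) = G x ^ (2:ℝ) := by
      intro x; rw [← ENNReal.rpow_mul]; norm_num
    calc ∫⁻ x, g x ^ ((3:ℝ)/2)
        ≤ ∫⁻ x, 2 ^ ((3:ℝ)/2) * (F x ^ ((3:ℝ)/2) * G x ^ ((3:ℝ)/2)) := lintegral_mono hb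
      _ = 2 ^ ((3:ℝ)/2) * ∫⁻ x, F x ^ ((3:ℝ)/2) * G x ^ ((3:ℝ)/2) :=
          lintegral_const_mul _ ((hFm.pow_const _).mul (hGm.pow_const _))
      _ ≤ 2 ^ ((3:ℝ)/2) * ((∫⁻ x, (F x ^ ((3:ℝ)/2)) ^ (4:ℝ)) ^ ((1:ℝ)/4)
            * (∫⁻ x, (G x ^ ((3:ℝ)/2)) ^ ((4:ℝ)/3)) ^ ((1:ℝ)/(4/3))) := by
          gcongr
          exact hH
      _ = 2 ^ ((3:ℝ)/2) * ((∫⁻ x, F x ^ (6:ℝ)) ^ ((1:ℝ)/4)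
            * (∫⁻ x, G x ^ (2:ℝ)) ^ ((3:ℝ)/4)) := by
          simp_rw [e3, e4]; norm_num
  -- combine
  have step3 : (∫⁻ x, g x ^ ((3:ℝ)/2)) ^ ((2:ℝ)/3)
      ≤ 2 * ((∫⁻ x, F x ^ (6:ℝ)) ^ ((1:ℝ)/6) * (∫⁻ x, G x ^ (2:ℝ)) ^ ((1:ℝ)/2)) := by
    calc (∫⁻ x, g x ^ ((3:ℝ)/2)) ^ ((2:ℝ)/3)
        ≤ (2 ^ ((3:ℝ)/2) * ((∫⁻ x, F x ^ (6:ℝ)) ^ ((1:ℝ)/4)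
            * (∫⁻ x, G x ^ (2:ℝ)) ^ ((3:ℝ)/4))) ^ ((2:ℝ)/3) :=
          ENNReal.rpow_le_rpow step2 (by norm_num)
      _ = 2 * ((∫⁻ x, F x ^ (6:ℝ)) ^ ((1:ℝ)/6) * (∫⁻ x, G x ^ (2:ℝ)) ^ ((1:ℝ)/2)) := by
          rw [ENNReal.mul_rpow_of_nonneg _ _ (by norm_num),
            ENNReal.mul_rpow_of_nonneg _ _ (by norm_num),
            ← ENNReal.rpow_mul, ← ENNReal.rpow_mul, ← ENNReal.rpow_mul]
          norm_num
  calc ∫⁻ x, F x ^ (2:ℝ) * g (x - w)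
      ≤ (∫⁻ x, F x ^ (6:ℝ)) ^ ((1:ℝ)/3) * (∫⁻ x, g x ^ ((3:ℝ)/2)) ^ ((2:ℝ)/3) := step1
    _ ≤ (∫⁻ x, F x ^ (6:ℝ)) ^ ((1:ℝ)/3)
        * (2 * ((∫⁻ x, F x ^ (6:ℝ)) ^ ((1:ℝ)/6) * (∫⁻ x, G x ^ (2:ℝ)) ^ ((1:ℝ)/2))) := by
        gcongr

lemma Dz_bound (Φ : E3 → ℂ) (hdiff : Differentiable ℝ Φ) (z : E3) :
    ∫⁻ x, (‖Φ x‖₊ : ℝ≥0∞) ^ (2:ℝ)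
        * ENNReal.ofReal |‖Φ (x - z)‖ ^ 2 - ‖Φ x‖ ^ 2|
      ≤ (‖z‖₊ : ℝ≥0∞) * ((∫⁻ x, (‖Φ x‖₊ : ℝ≥0∞) ^ (6:ℝ)) ^ ((1:ℝ)/3) *
        (2 * ((∫⁻ x, (‖Φ x‖₊:ℝ≥0∞) ^ (6:ℝ)) ^ ((1:ℝ)/6) *
          (∫⁻ x, (‖fderiv ℝ Φ x‖₊:ℝ≥0∞) ^ (2:ℝ)) ^ ((1:ℝ)/2)))) := by
  have hΦc : Continuous Φ := hdiff.continuous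
  set u : E3 → ℝ := fun y => ‖Φ y‖ ^ 2 with hu
  have hud : Differentiable ℝ u := fun x => (normsq_hasFDerivAt Φ hdiff x).differentiableAt
  set F : E3 → ℝ≥0∞ := fun x => (‖Φ x‖₊ : ℝ≥0∞) with hF
  set g : E3 → ℝ≥0∞ := fun x => (‖fderiv ℝ u x‖₊ : ℝ≥0∞) with hg
  have hFm : Measurable F := hΦc.measurable.nnnorm.coe_nnreal_ennreal
  have hgm : Measurable g := (measurable_fderiv ℝ u).nnnorm.coe_nnreal_ennreal
  set C : ℝ≥0∞ := (∫⁻ x, F x ^ (6:ℝ)) ^ ((1:ℝ)/3) *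
    (2 * ((∫⁻ x, F x ^ (6:ℝ)) ^ ((1:ℝ)/6) *
      (∫⁻ x, (‖fderiv ℝ Φ x‖₊:ℝ≥0∞) ^ (2:ℝ)) ^ ((1:ℝ)/2))) with hC
  have hprodm : Measurable fun p : E3 × ℝ =>
      F p.1 ^ (2:ℝ) * ((‖z‖₊ : ℝ≥0∞) * g (p.1 - p.2 • z)) := by
    refine ((hFm.comp measurable_fst).pow_const _).mul (Measurable.const_mul ?_ _)
    exact hgm.comp ((by fun_prop : Measurable fun p : E3 × ℝ => p.1 - p.2 • z))
  calc ∫⁻ x, F x ^ (2:ℝ) * ENNReal.ofReal |u (x - z) - u x|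
      ≤ ∫⁻ x, F x ^ (2:ℝ) * ∫⁻ t in Set.Icc (0:ℝ) 1, (‖z‖₊ : ℝ≥0∞) * g (x - t • z) := by
        refine lintegral_mono fun x => ?_
        exact mul_le_mul_right (ftc_pointwise u hud x z) _
    _ = ∫⁻ x, ∫⁻ t in Set.Icc (0:ℝ) 1, F x ^ (2:ℝ) * ((‖z‖₊ : ℝ≥0∞) * g (x - t • z)) := by
        refine lintegral_congr fun x => ?_
        exact (lintegral_const_mul (F x ^ (2:ℝ))
          ((hgm.comp ((by fun_prop : Measurable fun t : ℝ => x - t • z))).const_mul _)).symm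
    _ = ∫⁻ t in Set.Icc (0:ℝ) 1, ∫⁻ x, F x ^ (2:ℝ) * ((‖z‖₊ : ℝ≥0∞) * g (x - t • z)) :=
        lintegral_lintegral_swap hprodm.aemeasurable
    _ ≤ ∫⁻ _t in Set.Icc (0:ℝ) 1, (‖z‖₊ : ℝ≥0∞) * C := by
        refine lintegral_mono fun t => ?_
        have hmx : Measurable fun x : E3 => F x ^ (2:ℝ) * g (x - t • z) :=
          (hFm.pow_const _).mul
            (hgm.comp ((by fun_prop : Measurable fun x : E3 => x - t • z)))
        have heq : ∫⁻ x, F x ^ (2:ℝ) * ((‖z‖₊ : ℝ≥0∞) * g (x - t • z))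
            = (‖z‖₊ : ℝ≥0∞) * ∫⁻ x, F x ^ (2:ℝ) * g (x - t • z) := by
          rw [← lintegral_const_mul _ hmx]
          refine lintegral_congr fun x => ?_; ring
        rw [heq]
        exact mul_le_mul_right (Q_bound Φ hdiff (t • z)) _
    _ = (‖z‖₊ : ℝ≥0∞) * C := by
        rw [setLIntegral_const]
        simp [Real.volume_Icc]

lemma abs_toReal_sub_le {a b k : ℝ≥0∞} (hb : b ≠ ⊤) (hk : k ≠ ⊤)
    (h1 : a ≤ b + k) (h2 : b ≤ a + k) : |a.toReal - b.toReal| ≤ k.toReal := by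
  have ha : a ≠ ⊤ := ne_top_of_le_ne_top (ENNReal.add_ne_top.2 ⟨hb, hk⟩) h1
  rw [abs_le]
  constructor
  · have := ENNReal.toReal_mono (ENNReal.add_ne_top.2 ⟨ha, hk⟩) h2
    rw [ENNReal.toReal_add ha hk] at this; linarith
  · have := ENNReal.toReal_mono (ENNReal.add_ne_top.2 ⟨hb, hk⟩) h1
    rw [ENNReal.toReal_add hb hk] at this; linarith

theorem interaction_energy_GP_approx (R : ℝ) (hR : 0 < R)
    (U : EuclideanSpace ℝ (Fin 3) → ℝ) (hU0 : ∀ x, 0 ≤ U x)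
    (hUint : Integrable U volume)
    (hUtot : ∫ x, U x = 4 * π)
    (hUsupp : ∀ x, R < ‖x‖ → U x = 0)
    (Φ : EuclideanSpace ℝ (Fin 3) → ℂ)
    (hΦ2 : MemLp Φ 2 volume) (hΦ4 : MemLp Φ 4 volume) (hΦ6 : MemLp Φ 6 volume)
    (hdiff : Differentiable ℝ Φ)
    (hgrad : MemLp (fun x => fderiv ℝ Φ x) 2 volume) :
    |(∫ x, ∫ y, ‖Φ x‖ ^ 2 * ‖Φ y‖ ^ 2 * U (x - y))
        - 4 * π * (eLpNorm Φ 4 volume).toReal ^ 4|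
      ≤ 8 * π * R * (eLpNorm Φ 6 volume).toReal ^ 3
          * (eLpNorm (fun x => fderiv ℝ Φ x) 2 volume).toReal := by
  have hΦc : Continuous Φ := hdiff.continuous
  obtain ⟨Um, hUmsm, hUae⟩ := hUint.1
  have hUmm : Measurable Um := hUmsm.measurable
  set F : E3 → ℝ≥0∞ := fun x => (‖Φ x‖₊ : ℝ≥0∞) with hF
  set f : E3 → ℝ≥0∞ := fun x => F x ^ (2:ℝ) with hfdef
  set V : E3 → ℝ≥0∞ := fun z => ENNReal.ofReal (Um z) with hV
  set G : E3 → ℝ≥0∞ := fun x => (‖fderiv ℝ Φ x‖₊ : ℝ≥0∞) with hG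
  have hFm : Measurable F := hΦc.measurable.nnnorm.coe_nnreal_ennreal
  have hfm : Measurable f := hFm.pow_const _
  have hVm : Measurable V := hUmm.ennreal_ofReal
  set u : E3 → ℝ := fun y => ‖Φ y‖ ^ 2 with hu
  have huc : Continuous u := (hΦc.norm.pow 2)
  have hfoR : ∀ x, ENNReal.ofReal (u x) = f x := by
    intro x
    simp only [hfdef, hF, hu]
    rw [ENNReal.ofReal_pow (norm_nonneg _), ofReal_norm, enorm_eq_nnnorm,
      ← ENNReal.rpow_natCast]
    norm_num
  have hfnat : ∀ x, f x = F x ^ (2:ℕ) := by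
    intro x; rw [hfdef, ← ENNReal.rpow_natCast]; norm_num
  have hff : ∀ x, f x * f x = F x ^ (4:ℝ) := by
    intro x; rw [hfnat, ← pow_add, ← ENNReal.rpow_natCast]; norm_num
  set I6 : ℝ≥0∞ := eLpNorm Φ 6 volume with hI6def
  set I2 : ℝ≥0∞ := eLpNorm (fun x => fderiv ℝ Φ x) 2 volume with hI2def
  set I4 : ℝ≥0∞ := eLpNorm Φ 4 volume with hI4def
  have h6 : I6 ^ (6:ℕ) = ∫⁻ x, F x ^ (6:ℝ) := by
    rw [hI6def, eLpNorm_eq_lintegral_rpow_enorm_toReal (by norm_num) (by norm_num),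
      ← ENNReal.rpow_natCast, ← ENNReal.rpow_mul]
    norm_num; rfl
  have h2g : I2 ^ (2:ℕ) = ∫⁻ x, G x ^ (2:ℝ) := by
    rw [hI2def, eLpNorm_eq_lintegral_rpow_enorm_toReal (by norm_num) (by norm_num),
      ← ENNReal.rpow_natCast, ← ENNReal.rpow_mul]
    norm_num; rfl
  have h4 : I4 ^ (4:ℕ) = ∫⁻ x, F x ^ (4:ℝ) := by
    rw [hI4def, eLpNorm_eq_lintegral_rpow_enorm_toReal (by norm_num) (by norm_num),
      ← ENNReal.rpow_natCast, ← ENNReal.rpow_mul]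
    norm_num; rfl
  have hI6ne : I6 ≠ ⊤ := hΦ6.2.ne
  have hI2ne : I2 ≠ ⊤ := hgrad.2.ne
  have hI4ne : I4 ≠ ⊤ := hΦ4.2.ne
  set CC : ℝ≥0∞ := I6 ^ (2:ℕ) * (2 * (I6 * I2)) with hCC
  have hCCne : CC ≠ ⊤ := by
    rw [hCC]
    exact ENNReal.mul_ne_top (ENNReal.pow_ne_top hI6ne)
      (ENNReal.mul_ne_top (by norm_num) (ENNReal.mul_ne_top hI6ne hI2ne))
  set D : E3 → ℝ≥0∞ := fun z => ∫⁻ x, f x * ENNReal.ofReal |u (x - z) - u x| with hD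
  have hDle : ∀ z, D z ≤ (‖z‖₊ : ℝ≥0∞) * CC := by
    intro z
    have h := Dz_bound Φ hdiff z
    have e1 : (∫⁻ x, F x ^ (6:ℝ)) ^ ((1:ℝ)/3) = I6 ^ (2:ℕ) := by
      rw [← h6, ← ENNReal.rpow_natCast, ← ENNReal.rpow_mul, ← ENNReal.rpow_natCast]
      norm_num
    have e2 : (∫⁻ x, F x ^ (6:ℝ)) ^ ((1:ℝ)/6) = I6 := by
      rw [← h6, ← ENNReal.rpow_natCast, ← ENNReal.rpow_mul]
      norm_num
    have e3 : (∫⁻ x, G x ^ (2:ℝ)) ^ ((1:ℝ)/2) = I2 := by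
      rw [← h2g, ← ENNReal.rpow_natCast, ← ENNReal.rpow_mul]
      norm_num
    rw [hD]
    calc ∫⁻ x, f x * ENNReal.ofReal |u (x - z) - u x|
        ≤ (‖z‖₊ : ℝ≥0∞) * ((∫⁻ x, F x ^ (6:ℝ)) ^ ((1:ℝ)/3) *
          (2 * ((∫⁻ x, F x ^ (6:ℝ)) ^ ((1:ℝ)/6) * (∫⁻ x, G x ^ (2:ℝ)) ^ ((1:ℝ)/2)))) := h
      _ = (‖z‖₊ : ℝ≥0∞) * CC := by rw [e1, e2, e3]
  set N : ℝ≥0∞ := ∫⁻ x, f x * f x with hNdef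
  have hN4 : N = I4 ^ (4:ℕ) := by
    rw [hNdef, h4]; exact lintegral_congr fun x => hff x
  have hNne : N ≠ ⊤ := by rw [hN4]; exact ENNReal.pow_ne_top hI4ne
  set P : E3 → ℝ≥0∞ := fun z => ∫⁻ x, f x * f (x - z) with hP
  have hdm : Measurable (Function.uncurry fun z x => f x * ENNReal.ofReal |u (x - z) - u x|) := by
    refine (hfm.comp measurable_snd).mul ?_
    refine ENNReal.measurable_ofReal.comp ?_
    exact ((huc.comp (continuous_snd.sub continuous_fst)).sub (huc.comp continuous_snd)).abs.measurable
  have hDm : Measurable D := hdm.lintegral_prod_right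
  have hPm : Measurable P :=
    Measurable.lintegral_prod_right
      ((hfm.comp measurable_snd).mul (hfm.comp (measurable_snd.sub measurable_fst)))
  have hPN : ∀ z, P z ≤ N + D z := by
    intro z
    have hpt : ∀ x, f x * f (x - z) ≤ f x * f x + f x * ENNReal.ofReal |u (x - z) - u x| := by
      intro x
      rw [← mul_add]
      refine mul_le_mul_right ?_ _
      rw [← hfoR, ← hfoR, ← ENNReal.ofReal_add (by positivity) (abs_nonneg _)]
      refine ENNReal.ofReal_le_ofReal ?_
      have h := le_abs_self (u (x - z) - u x)
      linarith
    calc P z ≤ ∫⁻ x, (f x * f x + f x * ENNReal.ofReal |u (x - z) - u x|) :=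
          lintegral_mono hpt
      _ = N + D z := lintegral_add_left (hfm.mul hfm) _
  have hNP : ∀ z, N ≤ P z + D z := by
    intro z
    have hpt : ∀ x, f x * f x ≤ f x * f (x - z) + f x * ENNReal.ofReal |u (x - z) - u x| := by
      intro x
      rw [← mul_add]
      refine mul_le_mul_right ?_ _
      rw [← hfoR, ← hfoR, ← ENNReal.ofReal_add (by positivity) (abs_nonneg _)]
      refine ENNReal.ofReal_le_ofReal ?_
      have := neg_abs_le (u (x - z) - u x)
      linarith
    calc N ≤ ∫⁻ x, (f x * f (x - z) + f x * ENNReal.ofReal |u (x - z) - u x|) :=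
          lintegral_mono hpt
      _ = P z + D z := lintegral_add_left
          ((hfm).mul (hfm.comp (measurable_id.sub measurable_const))) _
  set L : ℝ≥0∞ := ∫⁻ x, ∫⁻ y, f x * f y * V (x - y) with hL
  have hinner : ∀ x, ∫⁻ y, f x * f y * V (x - y) = ∫⁻ z, f x * f (x - z) * V z := by
    intro x
    have hTm : Measurable fun z => f x * f (x - z) * V z :=
      ((hfm.comp (measurable_const.sub measurable_id)).const_mul _).mul hVm
    have h := (Measure.measurePreserving_sub_left volume x).lintegral_comp hTm
    calc ∫⁻ y, f x * f y * V (x - y)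
        = ∫⁻ y, f x * f (x - (x - y)) * V (x - y) := by
          refine lintegral_congr fun y => ?_; rw [sub_sub_cancel]
      _ = ∫⁻ z, f x * f (x - z) * V z := h
  have hswap : L = ∫⁻ z, V z * P z := by
    rw [hL]
    calc ∫⁻ x, ∫⁻ y, f x * f y * V (x - y)
        = ∫⁻ x, ∫⁻ z, f x * f (x - z) * V z := lintegral_congr fun x => hinner x
      _ = ∫⁻ z, ∫⁻ x, f x * f (x - z) * V z := by
          refine lintegral_lintegral_swap ?_
          exact (((hfm.comp measurable_fst).mul
            (hfm.comp (measurable_fst.sub measurable_snd))).mul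
            (hVm.comp measurable_snd)).aemeasurable
      _ = ∫⁻ z, V z * P z := by
          refine lintegral_congr fun z => ?_
          have hm : Measurable fun x : E3 => f x * f (x - z) :=
            hfm.mul (hfm.comp (measurable_id.sub measurable_const))
          calc ∫⁻ x, f x * f (x - z) * V z
              = ∫⁻ x, V z * (f x * f (x - z)) := by
                refine lintegral_congr fun x => ?_; ring
            _ = V z * ∫⁻ x, f x * f (x - z) := lintegral_const_mul _ hm
            _ = V z * P z := rfl
  set M : ℝ≥0∞ := ∫⁻ z, V z * N with hM
  have hVint : ∫⁻ z, V z = ENNReal.ofReal (4 * π) := by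
    rw [hV]
    calc ∫⁻ z, ENNReal.ofReal (Um z) = ∫⁻ z, ENNReal.ofReal (U z) := by
          refine lintegral_congr_ae ?_
          filter_upwards [hUae] with z hz
          rw [hz]
      _ = ENNReal.ofReal (∫ z, U z) :=
          (ofReal_integral_eq_lintegral_ofReal hUint (ae_of_all _ hU0)).symm
      _ = ENNReal.ofReal (4 * π) := by rw [hUtot]
  have hMval : M = ENNReal.ofReal (4 * π) * N := by
    rw [hM, lintegral_mul_const _ hVm, hVint, mul_comm]
  have hMne : M ≠ ⊤ := by
    rw [hMval]; exact ENNReal.mul_ne_top ENNReal.ofReal_ne_top hNne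
  set K : ℝ≥0∞ := ENNReal.ofReal (4 * π) * (ENNReal.ofReal R * CC) with hK
  have hKne : K ≠ ⊤ := by
    rw [hK]
    exact ENNReal.mul_ne_top ENNReal.ofReal_ne_top
      (ENNReal.mul_ne_top ENNReal.ofReal_ne_top hCCne)
  have hDK : ∫⁻ z, V z * D z ≤ K := by
    have hae : ∀ᵐ z : E3 ∂volume, V z * D z ≤ V z * (ENNReal.ofReal R * CC) := by
      filter_upwards [hUae] with z hz
      by_cases hz2 : R < ‖z‖
      · have : U z = 0 := hUsupp z hz2
        have hVz : V z = 0 := by rw [hV]; simp only []; rw [← hz, this]; simp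
        rw [hVz]; simp
      · push_neg at hz2
        refine mul_le_mul_right ?_ _
        refine (hDle z).trans (mul_le_mul_left ?_ _)
        rw [← enorm_eq_nnnorm, ← ofReal_norm]
        exact ENNReal.ofReal_le_ofReal hz2
    calc ∫⁻ z, V z * D z ≤ ∫⁻ z, V z * (ENNReal.ofReal R * CC) := lintegral_mono_ae hae
      _ = (∫⁻ z, V z) * (ENNReal.ofReal R * CC) := lintegral_mul_const _ hVm
      _ = K := by rw [hVint, hK]
  have hLM : L ≤ M + K := by
    rw [hswap]
    calc ∫⁻ z, V z * P z ≤ ∫⁻ z, (V z * N + V z * D z) := by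
          refine lintegral_mono fun z => ?_
          rw [← mul_add]
          exact mul_le_mul_right (hPN z) _
      _ = M + ∫⁻ z, V z * D z := by
          rw [lintegral_add_left (hVm.mul_const _), hM]
      _ ≤ M + K := by gcongr
  have hML : M ≤ L + K := by
    rw [hswap]
    calc M ≤ ∫⁻ z, (V z * P z + V z * D z) := by
          rw [hM]
          refine lintegral_mono fun z => ?_
          rw [← mul_add]
          exact mul_le_mul_right (hNP z) _
      _ = (∫⁻ z, V z * P z) + ∫⁻ z, V z * D z := lintegral_add_left (hVm.mul hPm) _
      _ ≤ (∫⁻ z, V z * P z) + K := by gcongr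
  -- identify LHS
  have hWm : Measurable fun x => ∫⁻ y, f x * f y * V (x - y) :=
    Measurable.lintegral_prod_right
      (((hfm.comp measurable_fst).mul (hfm.comp measurable_snd)).mul
        (hVm.comp (measurable_fst.sub measurable_snd)))
  have hLne : L ≠ ⊤ :=
    (hLM.trans_lt (ENNReal.add_lt_top.2 ⟨hMne.lt_top, hKne.lt_top⟩)).ne
  have hWlt : ∀ᵐ x : E3 ∂volume, (∫⁻ y, f x * f y * V (x - y)) < ⊤ :=
    ae_lt_top hWm hLne
  have hax : ∀ x : E3, (∫ y, ‖Φ x‖ ^ 2 * ‖Φ y‖ ^ 2 * U (x - y))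
      = (∫⁻ y, f x * f y * V (x - y)).toReal := by
    intro x
    have hqmp := (Measure.measurePreserving_sub_left (volume : Measure E3) x).quasiMeasurePreserving
    have haeU : (fun y => U (x - y)) =ᵐ[volume] fun y => Um (x - y) :=
      hqmp.ae_eq_comp hUae
    have haesm : AEStronglyMeasurable (fun y => ‖Φ x‖ ^ 2 * ‖Φ y‖ ^ 2 * U (x - y)) volume := by
      refine AEStronglyMeasurable.mul ?_ ?_
      · exact (continuous_const.mul (hΦc.norm.pow 2)).aestronglyMeasurable
      · exact hUint.1.comp_quasiMeasurePreserving hqmp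
    rw [integral_eq_lintegral_of_nonneg_ae
      (ae_of_all _ fun y => mul_nonneg (by positivity) (hU0 _)) haesm]
    congr 1
    refine lintegral_congr_ae ?_
    filter_upwards [haeU] with y hy
    rw [ENNReal.ofReal_mul (by positivity), ENNReal.ofReal_mul (by positivity),
      hfoR x, hfoR y, hy]
  have hLHS : (∫ x, ∫ y, ‖Φ x‖ ^ 2 * ‖Φ y‖ ^ 2 * U (x - y)) = L.toReal := by
    rw [hL]
    rw [← integral_toReal hWm.aemeasurable hWlt]
    exact integral_congr_ae (ae_of_all _ fun x => hax x)
  have hMr : M.toReal = 4 * π * I4.toReal ^ 4 := by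
    rw [hMval, hN4, ENNReal.toReal_mul, ENNReal.toReal_pow,
      ENNReal.toReal_ofReal (by positivity)]
  have hKr : K.toReal = 8 * π * R * I6.toReal ^ 3 * I2.toReal := by
    rw [hK, hCC]
    simp only [ENNReal.toReal_mul, ENNReal.toReal_pow, ENNReal.toReal_ofNat,
      ENNReal.toReal_ofReal (by positivity : (0:ℝ) ≤ 4 * π), ENNReal.toReal_ofReal hR.le]
    ring
  rw [hLHS, ← hMr, ← hKr]
  exact abs_toReal_sub_le hMne hKne hLM (by rw [hswap] at hML ⊢; exact hML)
end
end

section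
/- Let C ⊂ ℝ^m be a compact convex set and D a closed subset of its extreme points such that every exposed point of C lies in D. Then every extreme point of C lies in D. -/
open Set Metric

local notation "E" m => EuclideanSpace ℝ (Fin m)

/-- Convex hull of a compact set in `ℝ^m` is compact (Carathéodory). -/
theorem isCompact_convexHull_aux {m : ℕ} {s : Set (EuclideanSpace ℝ (Fin m))}
    (hs : IsCompact s) : IsCompact (convexHull ℝ s) := by
  classical
  set n := m + 1 with hn
  set f : (Fin n → ℝ) × (Fin n → EuclideanSpace ℝ (Fin m)) → EuclideanSpace ℝ (Fin m) :=
    fun p => ∑ i, p.1 i • p.2 i with hf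
  have hcont : Continuous f := by
    apply continuous_finset_sum
    intro i _
    exact ((continuous_apply i).comp continuous_fst).smul
      ((continuous_apply i).comp continuous_snd)
  have hT : IsCompact ((stdSimplex ℝ (Fin n)) ×ˢ (Set.pi Set.univ fun _ : Fin n => s)) :=
    (isCompact_stdSimplex (𝕜 := ℝ) (ι := Fin n)).prod (isCompact_univ_pi fun _ => hs)
  have himg : convexHull ℝ s =
      f '' ((stdSimplex ℝ (Fin n)) ×ˢ (Set.pi Set.univ fun _ : Fin n => s)) := by
    apply Subset.antisymm
    · intro x hx
      obtain ⟨ι, hfin, z, w, hzs, hai, hwpos, hwsum, hcomb⟩ :=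
        eq_pos_convex_span_of_mem_convexHull hx
      have hcard : Fintype.card ι ≤ n := by
        have h1 := hai.card_le_finrank_succ
        have h2 : Module.finrank ℝ (vectorSpan ℝ (Set.range z)) ≤ m := by
          have := Submodule.finrank_le (vectorSpan ℝ (Set.range z))
          rwa [finrank_euclideanSpace_fin] at this
        omega
      have hne : Nonempty ι := by
        by_contra h
        rw [not_nonempty_iff] at h
        rw [Finset.univ_eq_empty, Finset.sum_empty] at hwsum
        norm_num at hwsum
      obtain ⟨e⟩ : Nonempty (ι ↪ Fin n) :=
        Function.Embedding.nonempty_of_card_le (by simpa using hcard)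
      obtain ⟨i₀⟩ := hne
      set W : Fin n → ℝ := Function.extend e w 0 with hW
      set Z : Fin n → EuclideanSpace ℝ (Fin m) :=
        Function.extend e z (fun _ => z i₀) with hZ
      have hWe : ∀ i, W (e i) = w i := fun i => e.injective.extend_apply _ _ _
      have hZe : ∀ i, Z (e i) = z i := fun i => e.injective.extend_apply _ _ _
      have hsum : ∀ (g : Fin n → ℝ) (G : ι → ℝ), (∀ i, g (e i) = G i) →
          (∀ j, j ∉ Set.range e → g j = 0) → ∑ j, g j = ∑ i, G i := by
        intro g G hge hg0
        calc ∑ j, g j = ∑ j ∈ Finset.univ.map e, g j := by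
              refine (Finset.sum_subset (Finset.subset_univ _) ?_).symm
              intro j _ hj
              apply hg0
              rintro ⟨i, hi⟩
              exact hj (Finset.mem_map.2 ⟨i, Finset.mem_univ _, hi⟩)
          _ = ∑ i, g (e i) := Finset.sum_map _ e g
          _ = ∑ i, G i := Finset.sum_congr rfl fun i _ => hge i
      refine ⟨(W, Z), ⟨⟨fun j => ?_, ?_⟩, fun j _ => ?_⟩, ?_⟩
      · -- 0 ≤ W j
        rcases em (∃ i, e i = j) with ⟨i, rfl⟩ | h
        · show 0 ≤ W (e i)
          rw [hWe i]; exact (hwpos i).le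
        · show 0 ≤ W j
          rw [hW, Function.extend_apply' _ _ _ h]; rfl
      · -- ∑ W = 1
        rw [hsum W w hWe, hwsum]
        intro j hj
        rw [hW, Function.extend_apply' _ _ _ (by simpa [Set.range] using hj)]; rfl
      · -- Z j ∈ s
        rcases em (∃ i, e i = j) with ⟨i, rfl⟩ | h
        · show Z (e i) ∈ s
          rw [hZe i]; exact hzs ⟨i, rfl⟩
        · show Z j ∈ s
          rw [hZ, Function.extend_apply' _ _ _ h]
          exact hzs ⟨i₀, rfl⟩
      · -- f (W, Z) = x
        show ∑ j, W j • Z j = x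
        rw [← hcomb]
        have h0 : ∀ j, j ∉ Set.range e → W j • Z j = 0 := by
          intro j hj
          have : W j = 0 := by
            rw [hW, Function.extend_apply' _ _ _ (by simpa [Set.range] using hj)]; rfl
          simp [this]
        calc ∑ j, W j • Z j = ∑ j ∈ Finset.univ.map e, W j • Z j := by
              refine (Finset.sum_subset (Finset.subset_univ _) ?_).symm
              intro j _ hj
              apply h0
              rintro ⟨i, hi⟩
              exact hj (Finset.mem_map.2 ⟨i, Finset.mem_univ _, hi⟩)
          _ = ∑ i, W (e i) • Z (e i) := Finset.sum_map _ e _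
          _ = ∑ i, w i • z i := Finset.sum_congr rfl fun i _ => by rw [hWe, hZe]
    · rintro x ⟨⟨W, Z⟩, ⟨⟨hW0, hW1⟩, hZ⟩, rfl⟩
      exact (convex_convexHull ℝ s).sum_mem (fun i _ => hW0 i) hW1
        (fun i _ => subset_convexHull ℝ s (hZ i (Set.mem_univ i)))
  rw [himg]
  exact hT.image hcont

/-- A farthest point of a set from any point is an exposed point. -/
theorem farthest_mem_exposedPoints {m : ℕ} {C : Set (EuclideanSpace ℝ (Fin m))}
    {x z : EuclideanSpace ℝ (Fin m)} (hx : x ∈ C)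
    (hmax : ∀ y ∈ C, dist y z ≤ dist x z) : x ∈ C.exposedPoints ℝ := by
  rw [exposed_point_def]
  refine ⟨hx, innerSL ℝ (x - z), fun y hy => ?_⟩
  have key : 2 * inner ℝ (x - z) (y - x) ≤ -‖y - x‖ ^ 2 := by
    have h1 : ‖y - z‖ ≤ ‖x - z‖ := by
      have := hmax y hy
      rwa [dist_eq_norm, dist_eq_norm] at this
    have h2 : ‖y - z‖ ^ 2 ≤ ‖x - z‖ ^ 2 := by
      have := mul_self_le_mul_self (norm_nonneg _) h1
      nlinarith
    have h3 : ‖(y - x) + (x - z)‖ ^ 2 = ‖y - x‖ ^ 2 + 2 * inner ℝ (y - x) (x - z) + ‖x - z‖ ^ 2 :=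
      norm_add_sq_real _ _
    rw [show y - x + (x - z) = y - z by abel] at h3
    rw [real_inner_comm] at h3
    linarith
  have hl : (innerSL ℝ (x - z)) y - (innerSL ℝ (x - z)) x = inner ℝ (x - z) (y - x) := by
    rw [innerSL_apply_apply, innerSL_apply_apply, ← inner_sub_right]
  constructor
  · nlinarith [sq_nonneg (‖y - x‖)]
  · intro hle
    have : ‖y - x‖ ^ 2 ≤ 0 := by nlinarith
    have : y - x = 0 := by
      have := norm_eq_zero.mp (le_antisymm (by nlinarith [norm_nonneg (y - x)]) (norm_nonneg _))
      exact this
    rw [sub_eq_zero] at this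
    exact this

set_option maxHeartbeats 1000000 in
theorem extremePoints_subset_of_exposedPoints_subset (m : ℕ)
    (C D : Set (EuclideanSpace ℝ (Fin m)))
    (hCcomp : IsCompact C) (hCconv : Convex ℝ C)
    (hDclosed : IsClosed D) (hDsub : D ⊆ C.extremePoints ℝ)
    (hexp : C.exposedPoints ℝ ⊆ D) :
    C.extremePoints ℝ ⊆ D := by
  intro p hp
  have hpC : p ∈ C := hp.1
  suffices h : p ∈ closure D by rwa [hDclosed.closure_eq] at h
  rw [Metric.mem_closure_iff]
  intro ε hε
  -- the compact convex set spanned by the part of C away from p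
  set S : Set (EuclideanSpace ℝ (Fin m)) := C \ Metric.ball p ε with hSdef
  have hSclosed : IsClosed S := hCcomp.isClosed.sdiff Metric.isOpen_ball
  have hScomp : IsCompact S := hCcomp.of_isClosed_subset hSclosed Set.diff_subset
  set K : Set (EuclideanSpace ℝ (Fin m)) := convexHull ℝ S with hKdef
  have hKcomp : IsCompact K := isCompact_convexHull_aux hScomp
  have hSK : S ⊆ K := subset_convexHull ℝ S
  have hKC : K ⊆ C := convexHull_min Set.diff_subset hCconv
  have hpK : p ∉ K := by
    have h1 : p ∉ convexHull ℝ (C \ {p}) :=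
      ((hCconv.mem_extremePoints_iff_mem_diff_convexHull_diff.mp hp)).2
    intro hmem
    exact h1 (convexHull_mono (Set.diff_subset_diff_right
      (Set.singleton_subset_iff.mpr (Metric.mem_ball_self hε))) hmem)
  obtain ⟨f, u, hfK, hfp⟩ :=
    geometric_hahn_banach_closed_point (convex_convexHull ℝ S) hKcomp.isClosed hpK
  set v : EuclideanSpace ℝ (Fin m) :=
    (InnerProductSpace.toDual ℝ (EuclideanSpace ℝ (Fin m))).symm f with hvdef
  have hv : ∀ y, (inner ℝ v y : ℝ) = f y := fun y => InnerProductSpace.toDual_symm_apply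
  -- bound on C
  obtain ⟨r, hr⟩ := hCcomp.isBounded.subset_closedBall p
  set R : ℝ := max r 1 with hRdef
  have hR1 : (1 : ℝ) ≤ R := le_max_right _ _
  have hRC : ∀ y ∈ C, ‖y - p‖ ≤ R := by
    intro y hy
    have := hr hy
    rw [Metric.mem_closedBall, dist_eq_norm] at this
    exact this.trans (le_max_left _ _)
  set δ : ℝ := f p - u with hδdef
  have hδ : 0 < δ := sub_pos.mpr hfp
  set t : ℝ := R ^ 2 / δ with htdef
  have ht : 0 < t := div_pos (by nlinarith) hδ
  set z : EuclideanSpace ℝ (Fin m) := p - t • v with hzdef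
  -- farthest point of C from z
  obtain ⟨x, hxC, hxmax⟩ := hCcomp.exists_isMaxOn ⟨p, hpC⟩
    (Continuous.continuousOn (continuous_id.dist continuous_const))
  have hxexp : x ∈ C.exposedPoints ℝ :=
    farthest_mem_exposedPoints hxC fun y hy => hxmax hy
  refine ⟨x, hexp hxexp, ?_⟩
  rw [dist_comm]
  by_contra hfar
  push_neg at hfar
  have hxS : x ∈ S := ⟨hxC, by simpa [Metric.mem_ball] using hfar⟩
  have hxK : x ∈ K := hSK hxS
  -- derive a contradiction with maximality of x
  have hpz : dist p z ≤ dist x z := hxmax hpC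
  have e1 : dist p z ^ 2 = t ^ 2 * ‖v‖ ^ 2 := by
    rw [dist_eq_norm, hzdef]
    rw [show p - (p - t • v) = t • v by abel]
    rw [norm_smul, mul_pow, Real.norm_eq_abs, sq_abs]
  have e2 : dist x z ^ 2 = ‖x - p‖ ^ 2 + 2 * (t * inner ℝ v (x - p)) + t ^ 2 * ‖v‖ ^ 2 := by
    rw [dist_eq_norm, hzdef]
    rw [show x - (p - t • v) = (x - p) + t • v by abel]
    rw [norm_add_sq_real, real_inner_smul_right, real_inner_comm (x - p) v, norm_smul,
      mul_pow, Real.norm_eq_abs, sq_abs]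
  have hinner : (inner ℝ v (x - p) : ℝ) ≤ -δ := by
    rw [inner_sub_right, hv, hv]
    have := hfK x hxK
    linarith
  have hxp : ‖x - p‖ ≤ R := hRC x hxC
  have hsq : dist p z ^ 2 ≤ dist x z ^ 2 := by
    have h0 : 0 ≤ dist p z := dist_nonneg
    nlinarith [dist_nonneg (x := x) (y := z)]
  have htδ : t * δ = R ^ 2 := by
    rw [htdef]; field_simp
  nlinarith [norm_nonneg (x - p), mul_le_mul_of_nonneg_left hinner ht.le]
end

section
/- Let c_k be complex numbers and e_k > 0, and set A = Σ_k c_k a_k with a_k bosonic annihilation operators. Then (A + A†)² ≤ 4 (Σ_k |c_k|²/e_k)(Σ_k e_k a_k† a_k) + 2 Σ_k |c_k|², as operators on bosonic Fock space (sums finite). -/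
theorem linear_combination_annihilation_square_bound
    {V : Type*} [NormedAddCommGroup V] [InnerProductSpace ℂ V]
    (a ad : ℕ → Module.End ℂ V)
    -- canonical commutation relations
    (hCCR : ∀ m n, a m * ad n - ad n * a m = if m = n then 1 else 0)
    (hcomm : ∀ m n, a m * a n = a n * a m)
    -- `ad k` is the adjoint of `a k`
    (hadj : ∀ k (v w : V), (inner ℂ (ad k v) w : ℂ) = inner ℂ v (a k w))
    (c : ℕ → ℂ) (e : ℕ → ℝ) (hepos : ∀ k, 0 < e k) (s : Finset ℕ) :
    ∀ v : V,
      (inner ℂ v (((∑ k ∈ s, c k • a k + ∑ k ∈ s, (starRingEnd ℂ (c k)) • ad k) *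
          (∑ k ∈ s, c k • a k + ∑ k ∈ s, (starRingEnd ℂ (c k)) • ad k)) v) : ℂ).re
        ≤ 4 * (∑ k ∈ s, ‖c k‖ ^ 2 / e k) *
            (inner ℂ v ((∑ k ∈ s, ((e k : ℝ) : ℂ) • (ad k * a k)) v) : ℂ).re
          + 2 * (∑ k ∈ s, ‖c k‖ ^ 2) * ‖v‖ ^ 2 := by
  intro v
  set A : Module.End ℂ V := ∑ k ∈ s, c k • a k with hA
  set Ad : Module.End ℂ V := ∑ k ∈ s, (starRingEnd ℂ (c k)) • ad k with hAd
  set C : ℝ := ∑ k ∈ s, ‖c k‖ ^ 2 with hC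
  set D : ℝ := ∑ k ∈ s, ‖c k‖ ^ 2 / e k with hD
  -- adjoint of single operators, flipped
  have hadj' : ∀ k (w u : V), (inner ℂ w (ad k u) : ℂ) = inner ℂ (a k w) u := by
    intro k w u
    rw [← inner_conj_symm, hadj, inner_conj_symm]
  -- adjointness of A and Ad
  have h1 : ∀ w u : V, (inner ℂ (Ad w) u : ℂ) = inner ℂ w (A u) := by
    intro w u
    simp [hA, hAd, LinearMap.sum_apply, sum_inner, inner_sum, LinearMap.smul_apply,
      inner_smul_left, inner_smul_right, hadj]
    exact Finset.sum_congr rfl fun k _ => mul_comm _ _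
  have h2 : ∀ w u : V, (inner ℂ (A w) u : ℂ) = inner ℂ w (Ad u) := by
    intro w u
    rw [← inner_conj_symm, ← h1, inner_conj_symm]
  -- the commutator identity
  have hcomm1 : A * Ad = Ad * A + (C : ℂ) • (1 : Module.End ℂ V) := by
    have key : A * Ad - Ad * A = (C : ℂ) • (1 : Module.End ℂ V) := by
      rw [hA, hAd, Finset.sum_mul_sum, Finset.sum_mul_sum]
      rw [Finset.sum_comm (s := s) (t := s)
        (f := fun k j => ((starRingEnd ℂ (c k)) • ad k) * (c j • a j)), ← Finset.sum_sub_distrib]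
      have : ∀ j ∈ s, (∑ k ∈ s, (c j • a j) * ((starRingEnd ℂ (c k)) • ad k))
          - (∑ k ∈ s, ((starRingEnd ℂ (c k)) • ad k) * (c j • a j))
          = (‖c j‖ ^ 2 : ℂ) • (1 : Module.End ℂ V) := by
        intro j hj
        rw [← Finset.sum_sub_distrib]
        have : ∀ k ∈ s, (c j • a j) * ((starRingEnd ℂ (c k)) • ad k)
            - ((starRingEnd ℂ (c k)) • ad k) * (c j • a j)
            = if j = k then (c j * starRingEnd ℂ (c j)) • (1 : Module.End ℂ V) else 0 := by
          intro k hk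
          rw [smul_mul_smul_comm, smul_mul_smul_comm, mul_comm ((starRingEnd ℂ) (c k)) (c j),
            ← smul_sub, hCCR j k]
          split
          · subst ‹j = k›; rfl
          · simp
        rw [Finset.sum_congr rfl this, Finset.sum_ite_eq s j
          (fun k => (c j * starRingEnd ℂ (c j)) • (1 : Module.End ℂ V)), if_pos hj,
          Complex.mul_conj']
      rw [Finset.sum_congr rfl this, ← Finset.sum_smul]
      congr 1
      push_cast [hC]
      ring
    linear_combination (norm := module) key
  -- norms
  have hre : ∀ x : V, (inner ℂ x x : ℂ).re = ‖x‖ ^ 2 := fun x =>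
    inner_self_eq_norm_sq (𝕜 := ℂ) x
  have hAdv : ‖Ad v‖ ^ 2 = ‖A v‖ ^ 2 + C * ‖v‖ ^ 2 := by
    have key : (inner ℂ (Ad v) (Ad v) : ℂ) = inner ℂ (A v) (A v) + (C : ℂ) * inner ℂ v v := by
      rw [h1 v (Ad v)]
      have hx : A (Ad v) = Ad (A v) + (C : ℂ) • v := by
        have := congrArg (fun (T : Module.End ℂ V) => T v) hcomm1
        simpa [Module.End.mul_apply] using this
      rw [hx, inner_add_right, inner_smul_right, ← h2 v (A v)]
    have h3 := congrArg Complex.re key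
    rw [hre (Ad v)] at h3
    rw [h3, Complex.add_re, hre (A v)]
    simp [Complex.mul_re, hre v]
    left; norm_cast
  -- Cauchy-Schwarz bound on ‖A v‖
  set S : ℝ := ∑ k ∈ s, e k * ‖a k v‖ ^ 2 with hS
  have hSnonneg : 0 ≤ S := Finset.sum_nonneg fun k _ =>
    mul_nonneg (hepos k).le (by positivity)
  have hDnonneg : 0 ≤ D := Finset.sum_nonneg fun k _ =>
    div_nonneg (by positivity) (hepos k).le
  have hCS : ‖A v‖ ^ 2 ≤ D * S := by
    have step1 : ‖A v‖ ≤ ∑ k ∈ s, ‖c k‖ * ‖a k v‖ := by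
      have : A v = ∑ k ∈ s, c k • a k v := by
        simp [hA, LinearMap.sum_apply]
      rw [this]
      refine (norm_sum_le _ _).trans_eq ?_
      simp [norm_smul]
    have step2 : (∑ k ∈ s, ‖c k‖ * ‖a k v‖) ^ 2 ≤ D * S := by
      have := Finset.sum_mul_sq_le_sq_mul_sq s
        (fun k => ‖c k‖ / Real.sqrt (e k)) (fun k => Real.sqrt (e k) * ‖a k v‖)
      have heq : ∀ k ∈ s, ‖c k‖ / Real.sqrt (e k) * (Real.sqrt (e k) * ‖a k v‖)
          = ‖c k‖ * ‖a k v‖ := by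
        intro k _
        have hk := Real.sqrt_pos.mpr (hepos k)
        field_simp
      have heq2 : ∀ k ∈ s, (‖c k‖ / Real.sqrt (e k)) ^ 2 = ‖c k‖ ^ 2 / e k := by
        intro k _
        rw [div_pow, Real.sq_sqrt (hepos k).le]
      have heq3 : ∀ k ∈ s, (Real.sqrt (e k) * ‖a k v‖) ^ 2 = e k * ‖a k v‖ ^ 2 := by
        intro k _
        rw [mul_pow, Real.sq_sqrt (hepos k).le]
      rw [Finset.sum_congr rfl heq, Finset.sum_congr rfl heq2, Finset.sum_congr rfl heq3] at this
      exact this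
    calc ‖A v‖ ^ 2 ≤ (∑ k ∈ s, ‖c k‖ * ‖a k v‖) ^ 2 := by
          apply pow_le_pow_left₀ (norm_nonneg _) step1
      _ ≤ D * S := step2
  -- the RHS inner product equals S
  have hRHS : (inner ℂ v ((∑ k ∈ s, ((e k : ℝ) : ℂ) • (ad k * a k)) v) : ℂ).re = S := by
    have : (inner ℂ v ((∑ k ∈ s, ((e k : ℝ) : ℂ) • (ad k * a k)) v) : ℂ)
        = ∑ k ∈ s, ((e k : ℝ) : ℂ) * inner ℂ (a k v) (a k v) := by
      simp only [LinearMap.sum_apply, LinearMap.smul_apply, inner_sum, inner_smul_right,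
        Module.End.mul_apply]
      refine Finset.sum_congr rfl fun k _ => ?_
      rw [hadj' k v (a k v)]
    rw [this, hS, Complex.re_sum]
    refine Finset.sum_congr rfl fun k _ => ?_
    simp [Complex.mul_re, inner_self_im (𝕜 := ℂ)]
    left
    norm_cast
  -- LHS equals ‖(A + Ad) v‖ ^ 2
  have hLHS : (inner ℂ v (((A + Ad) * (A + Ad)) v) : ℂ).re = ‖(A + Ad) v‖ ^ 2 := by
    have : (inner ℂ v (((A + Ad) * (A + Ad)) v) : ℂ) = inner ℂ ((A + Ad) v) ((A + Ad) v) := by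
      have hs : ∀ w u : V, (inner ℂ ((A + Ad) w) u : ℂ) = inner ℂ w ((A + Ad) u) := by
        intro w u
        simp only [LinearMap.add_apply, sum_inner, inner_sum, inner_add_left, inner_add_right,
          h1, h2]
        ring
      rw [Module.End.mul_apply, ← hs v ((A + Ad) v)]
    rw [this, hre]
  rw [hLHS, hRHS]
  have htri : ‖(A + Ad) v‖ ^ 2 ≤ 2 * ‖A v‖ ^ 2 + 2 * ‖Ad v‖ ^ 2 := by
    have h0 : ‖(A + Ad) v‖ ≤ ‖A v‖ + ‖Ad v‖ := by
      have : (A + Ad) v = A v + Ad v := rfl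
      rw [this]; exact norm_add_le _ _
    have h1' := pow_le_pow_left₀ (norm_nonneg ((A + Ad) v)) h0 2
    nlinarith [sq_nonneg (‖A v‖ - ‖Ad v‖)]
  calc ‖(A + Ad) v‖ ^ 2 ≤ 2 * ‖A v‖ ^ 2 + 2 * ‖Ad v‖ ^ 2 := htri
    _ = 4 * ‖A v‖ ^ 2 + 2 * C * ‖v‖ ^ 2 := by rw [hAdv]; ring
    _ ≤ 4 * (D * S) + 2 * C * ‖v‖ ^ 2 := by linarith
    _ = 4 * D * S + 2 * C * ‖v‖ ^ 2 := by ring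
end
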